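/- arXiv:0712.1319 — 3 statements merged into one kernel-verified Lean document; each statement's English description precedes it below -/
import Mathlib

section
/- Let V be a monoidal model category with unit I and let [−]_V : VCat → Cat be the change-of-base functor along V → Ho(V) → Set, X ↦ Hom_{Ho(V)}(I, X). A V-functor f : A → B is both a DK-equivalence and a DK-fibration if and only if f is surjective on objects and, for every pair of objects x, y of A, the map f_{x,y} : A(x,y) → B(fx, fy) is a trivial fibration in V. -/
/-!
STATEMENT 7: Let `V` be a monoidal model category with weak equivalences `W`
and fibrations `Fib`.  The change-of-base functor `[−]_V : VCat → Cat` along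
`V → Ho(V) → Set`, `X ↦ Hom_{Ho(V)}(I, X)` is abstracted here as a lax
monoidal functor `F : V ⥤ Type` which inverts weak equivalences (i.e. sends
them to bijections) — this is the defining property of
`Hom_{Ho(V)}(I, γ(−))`.  The underlying category `[A]_V` of a `V`-category
`A` has the same objects as `A` and hom-sets `F(A(x, y))`, with identities
and composition induced by the lax monoidal structure.

A `V`-functor `f : A → B` is both a DK-equivalence and a DK-fibration if and
only if `f` is surjective on objects and each `f_{x,y} : A(x,y) → B(fx,fy)`
is a trivial fibration (a weak equivalence and a fibration) in `V`.
-/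

open CategoryTheory MonoidalCategory

universe v u w₁ w₂

variable {V : Type u} [Category.{v} V] [MonoidalCategory V]

section PointNotions

variable (F : V ⥤ Type v) [F.LaxMonoidal]

/-- The identity of `x` in the underlying category `[A]_V`:
the image of `eId` under the lax monoidal functor `F`. -/
def idPt {C : Type w₁} [EnrichedCategory V C] (x : C) : F.obj (x ⟶[V] x) :=
  F.map (eId V x) (Functor.LaxMonoidal.ε F PUnit.unit)

/-- Composition in the underlying category `[A]_V`. -/
def compPt {C : Type w₁} [EnrichedCategory V C] {x y z : C}
    (f : F.obj (x ⟶[V] y)) (g : F.obj (y ⟶[V] z)) : F.obj (x ⟶[V] z) :=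
  F.map (eComp V x y z) (Functor.LaxMonoidal.μ F (x ⟶[V] y) (y ⟶[V] z) ⟨f, g⟩)

/-- `f` is an isomorphism in the underlying category `[A]_V`. -/
def IsInvertiblePt {C : Type w₁} [EnrichedCategory V C] {x y : C}
    (f : F.obj (x ⟶[V] y)) : Prop :=
  ∃ g : F.obj (y ⟶[V] x), compPt F f g = idPt F x ∧ compPt F g f = idPt F y

variable {C : Type w₁} {D : Type w₂} [EnrichedCategory V C] [EnrichedCategory V D]

/-- `f` is homotopy essentially surjective: the induced functor
`[f]_V : [A]_V → [B]_V` is essentially surjective. -/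
def HoEssSurj (f : EnrichedFunctor V C D) : Prop :=
  ∀ d : D, ∃ c : C, ∃ u : F.obj ((f.obj c) ⟶[V] d), IsInvertiblePt F u

/-- `[f]_V` is an isofibration: every isomorphism of `[B]_V` with source
`[f]_V(x)` lifts to an isomorphism of `[A]_V` with source `x`. -/
def IsIsofibration (f : EnrichedFunctor V C D) : Prop :=
  ∀ (x : C) (y' : D) (v : F.obj ((f.obj x) ⟶[V] y')), IsInvertiblePt F v →
    ∃ (y : C) (h : f.obj y = y') (u : F.obj (x ⟶[V] y)),
      IsInvertiblePt F u ∧ (h ▸ F.map (f.map x y) u) = v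

variable (Weq Fib : MorphismProperty V)

/-- `f` is a DK-equivalence: homotopy essentially surjective and locally a
weak equivalence. -/
def IsDKEquiv (f : EnrichedFunctor V C D) : Prop :=
  HoEssSurj F f ∧ ∀ x y : C, Weq (f.map x y)

/-- `f` is a DK-fibration: locally a fibration, and `[f]_V` is an
isofibration. -/
def IsDKFib (f : EnrichedFunctor V C D) : Prop :=
  (∀ x y : C, Fib (f.map x y)) ∧ IsIsofibration F f

end PointNotions

section Aux

variable (F : V ⥤ Type v) [F.LaxMonoidal]

lemma compPt_idPt_left {C : Type w₁} [EnrichedCategory V C] {x y : C}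
    (g : F.obj (x ⟶[V] y)) : compPt F (idPt F x) g = g := by
  have hmu := ConcreteCategory.congr_hom (Functor.LaxMonoidal.μ_natural_left F (eId V x) (x ⟶[V] y))
    ⟨Functor.LaxMonoidal.ε F PUnit.unit, g⟩
  have hid : eId V x ▷ (x ⟶[V] y) ≫ eComp V x x y = (λ_ (x ⟶[V] y)).hom := by
    have := e_id_comp V x y
    rw [Iso.inv_comp_eq] at this
    simpa using this
  have hlu := ConcreteCategory.congr_hom (Functor.LaxMonoidal.left_unitality F (x ⟶[V] y)).symm
    ⟨PUnit.unit, g⟩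
  simp only [types_comp_apply, whiskerRight_apply] at hmu hlu
  erw [whiskerRight_apply] at hmu hlu
  simp only [compPt, idPt, hmu, ← FunctorToTypes.map_comp_apply, hid]
  exact hlu

lemma isInvertiblePt_idPt {C : Type w₁} [EnrichedCategory V C] (x : C) :
    IsInvertiblePt F (idPt F x) :=
  ⟨idPt F x, compPt_idPt_left F _, compPt_idPt_left F _⟩

variable {C : Type w₁} {D : Type w₂} [EnrichedCategory V C] [EnrichedCategory V D]
  (f : EnrichedFunctor V C D)

lemma map_idPt (x : C) : F.map (f.map x x) (idPt F x) = idPt F (f.obj x) := by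
  simp only [idPt, ← FunctorToTypes.map_comp_apply, f.map_id]

lemma map_compPt {x y z : C} (u : F.obj (x ⟶[V] y)) (v : F.obj (y ⟶[V] z)) :
    F.map (f.map x z) (compPt F u v) =
      compPt F (F.map (f.map x y) u) (F.map (f.map y z) v) := by
  have h1 := ConcreteCategory.congr_hom (congrArg F.map (f.map_comp x y z))
    (Functor.LaxMonoidal.μ F (x ⟶[V] y) (y ⟶[V] z) ⟨u, v⟩)
  have h2 := ConcreteCategory.congr_hom (Functor.LaxMonoidal.μ_natural F (f.map x y) (f.map y z)) ⟨u, v⟩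
  simp only [FunctorToTypes.map_comp_apply] at h1
  simp only [types_comp_apply, tensor_apply] at h2
  simp only [compPt, h1, ← h2]
  rfl

lemma isInvertiblePt_of_map {x y : C}
    (hbij : ∀ a b : C, Function.Bijective (F.map (f.map a b)))
    (u : F.obj (x ⟶[V] y)) (h : IsInvertiblePt F (F.map (f.map x y) u)) :
    IsInvertiblePt F u := by
  obtain ⟨g, hg1, hg2⟩ := h
  obtain ⟨g', rfl⟩ := (hbij y x).2 g
  refine ⟨g', (hbij x x).1 ?_, (hbij y y).1 ?_⟩
  · rw [map_compPt, hg1, map_idPt]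
  · rw [map_compPt, hg2, map_idPt]

end Aux

/-- A `V`-functor is both a DK-equivalence and a DK-fibration iff it is
surjective on objects and locally a trivial fibration. -/
theorem isDKEquiv_and_isDKFib_iff
    (F : V ⥤ Type v) [F.LaxMonoidal]
    (Weq Fib : MorphismProperty V)
    -- `F` abstracts `Hom_{Ho(V)}(I, γ(−))`: it inverts weak equivalences
    (hF : ∀ {X Y : V} (w : X ⟶ Y), Weq w → Function.Bijective (F.map w))
    {C : Type w₁} {D : Type w₂} [EnrichedCategory V C] [EnrichedCategory V D]
    (f : EnrichedFunctor V C D) :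
    (IsDKEquiv F Weq f ∧ IsDKFib F Fib f) ↔
      (Function.Surjective f.obj ∧
        ∀ x y : C, Weq (f.map x y) ∧ Fib (f.map x y)) := by
  constructor
  · rintro ⟨⟨hsurj, hweq⟩, hfib, hiso⟩
    refine ⟨?_, fun x y => ⟨hweq x y, hfib x y⟩⟩
    intro d
    obtain ⟨c, u, hu⟩ := hsurj d
    obtain ⟨y, hy, -⟩ := hiso c d u hu
    exact ⟨y, hy⟩
  · rintro ⟨hsurj, hloc⟩
    have hbij : ∀ a b : C, Function.Bijective (F.map (f.map a b)) :=
      fun a b => hF _ (hloc a b).1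
    refine ⟨⟨?_, fun x y => (hloc x y).1⟩, fun x y => (hloc x y).2, ?_⟩
    · intro d
      obtain ⟨c, rfl⟩ := hsurj d
      exact ⟨c, idPt F (f.obj c), isInvertiblePt_idPt F _⟩
    · intro x y' v hv
      obtain ⟨y, rfl⟩ := hsurj y'
      obtain ⟨u, rfl⟩ := (hbij x y).2 v
      exact ⟨y, rfl, u, isInvertiblePt_of_map F f hbij u hv, rfl⟩
end

section
/- Let F : V → W and G : W → V be an adjunction F ⊣ G between symmetric monoidal categories where G is lax symmetric monoidal (so F is oplax monoidal). If F is strong monoidal and preserves the unit, then the induced functors on enriched categories F' : VCat → WCat and G' : WCat → VCat again form an adjunction F' ⊣ G'. -/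
/-!
STATEMENT 9: Let `F : V → W` and `G : W → V` with an adjunction `F ⊣ G`
between symmetric monoidal categories, where `F` is strong monoidal
(preserving the unit) and `G` carries the induced (doctrinal) lax symmetric
monoidal structure `adj.rightAdjointLaxMonoidal`.  Then the induced
change-of-base functors `F' : VCat → WCat` and `G' : WCat → VCat` again form
an adjunction `F' ⊣ G'`: there is an equivalence of hom-sets
`WCat(F'A, B) ≃ VCat(A, G'B)` natural in both variables.
-/

open CategoryTheory MonoidalCategory Functor.LaxMonoidal

universe v₁ v₂ u₁ u₂ w

variable {V : Type u₁} [Category.{v₁} V] [MonoidalCategory V] [SymmetricCategory V]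
variable {W : Type u₂} [Category.{v₂} W] [MonoidalCategory W] [SymmetricCategory W]

/-- The transported enrichment, with the enrichment instance made explicit. -/
def transportEnrichment (F : V ⥤ W) [F.LaxMonoidal] (C : Type w)
    (iC : EnrichedCategory V C) : EnrichedCategory W (TransportEnrichment F C) :=
  letI := iC
  inferInstance

/-- The induced functor `F'` on enriched functors: identity on objects, `F`
on hom-objects (enrichment instances explicit). -/
def transportFunctor (F : V ⥤ W) [F.LaxMonoidal]
    {C : Type w} {D : Type w} (iC : EnrichedCategory V C) (iD : EnrichedCategory V D)
    (f : @EnrichedFunctor V _ _ C iC D iD) :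
    @EnrichedFunctor W _ _ (TransportEnrichment F C) (transportEnrichment F C iC)
      (TransportEnrichment F D) (transportEnrichment F D iD) :=
  letI := iC
  letI := iD
  { obj := f.obj
    map := fun x y => F.map (f.map x y)
    map_id := fun x => by
      show (ε F ≫ F.map (eId V (show C from x))) ≫ F.map (f.map x x)
        = ε F ≫ F.map (eId V (f.obj x))
      rw [Category.assoc, ← F.map_comp, f.map_id]
    map_comp := fun x y z => by
      show (μ F _ _ ≫ F.map (eComp V (show C from x) (show C from y) (show C from z))) ≫
          F.map (f.map x z)
        = (F.map (f.map x y) ⊗ₘ F.map (f.map y z)) ≫ μ F _ _ ≫ F.map (eComp V _ _ _)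
      rw [Category.assoc, ← F.map_comp, f.map_comp, F.map_comp,
        ← Category.assoc, ← Functor.LaxMonoidal.μ_natural, Category.assoc] }


section Aux

open Functor.OplaxMonoidal Adjunction

/-- Extensionality for enriched functors. -/
lemma myExt {C : Type w} {D : Type w} [EnrichedCategory V C]
    [EnrichedCategory V D] {f g : EnrichedFunctor V C D}
    (h1 : f.obj = g.obj) (h2 : HEq f.map g.map) : f = g := by
  cases f; cases g; cases h1; cases h2; rfl

variable (F : V ⥤ W) (G : W ⥤ V) (adj : F ⊣ G) [F.Monoidal] [G.LaxMonoidal]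
  [adj.IsMonoidal]
variable {C : Type w} {D : Type w} [EnrichedCategory V C] [EnrichedCategory W D]

/-- Forward direction of the hom-set equivalence. -/
def fwd (g : EnrichedFunctor W (TransportEnrichment F C) D) :
    EnrichedFunctor V C (TransportEnrichment G D) where
  obj x := (g.obj (show TransportEnrichment F C from x) : D)
  map x y := adj.homEquiv (x ⟶[V] y) _ (g.map x y)
  map_id x := by
    have hg : (ε F ≫ F.map (eId V x)) ≫ g.map x x = eId W (g.obj x) := g.map_id x
    have h1 : F.map (eId V x) ≫ g.map x x = η F ≫ eId W (g.obj x) := by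
      rw [← hg]; simp
    show eId V x ≫ adj.homEquiv _ _ (g.map x x) = ε G ≫ G.map (eId W (g.obj x))
    calc eId V x ≫ adj.homEquiv _ _ (g.map x x)
        = adj.unit.app _ ≫ G.map (F.map (eId V x) ≫ g.map x x) := by
          rw [Adjunction.homEquiv_unit, ← adj.unit_naturality_assoc, G.map_comp]
      _ = (adj.unit.app _ ≫ G.map (η F)) ≫ G.map (eId W (g.obj x)) := by
          rw [h1, G.map_comp]; simp
      _ = ε G ≫ G.map (eId W (g.obj x)) := by
          rw [adj.unit_app_unit_comp_map_η]
  map_comp x y z := by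
    have hg : (μ F (x ⟶[V] y) (y ⟶[V] z) ≫ F.map (eComp V x y z)) ≫ g.map x z =
        (g.map x y ⊗ₘ g.map y z) ≫ eComp W (g.obj x) (g.obj y) (g.obj z) := g.map_comp x y z
    have h1 : F.map (eComp V x y z) ≫ g.map x z =
        δ F _ _ ≫ (g.map x y ⊗ₘ g.map y z) ≫ eComp W (g.obj x) (g.obj y) (g.obj z) := by
      rw [← hg]; simp
    show eComp V x y z ≫ adj.homEquiv _ _ (g.map x z) =
      (adj.homEquiv _ _ (g.map x y) ⊗ₘ adj.homEquiv _ _ (g.map y z)) ≫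
        μ G _ _ ≫ G.map (eComp W (g.obj x) (g.obj y) (g.obj z))
    calc eComp V x y z ≫ adj.homEquiv _ _ (g.map x z)
        = adj.unit.app _ ≫ G.map (F.map (eComp V x y z) ≫ g.map x z) := by
          rw [Adjunction.homEquiv_unit, ← adj.unit_naturality_assoc, G.map_comp]
      _ = (adj.unit.app _ ≫ G.map (δ F _ _)) ≫
            G.map ((g.map x y ⊗ₘ g.map y z) ≫ eComp W (g.obj x) (g.obj y) (g.obj z)) := by
          rw [h1, G.map_comp]; simp
      _ = (adj.unit.app _ ⊗ₘ adj.unit.app _) ≫ μ G _ _ ≫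
            G.map (g.map x y ⊗ₘ g.map y z) ≫ G.map (eComp W _ _ _) := by
          rw [adj.unit_app_tensor_comp_map_δ, G.map_comp]; simp
      _ = (adj.unit.app _ ⊗ₘ adj.unit.app _) ≫ (G.map (g.map x y) ⊗ₘ G.map (g.map y z)) ≫
            μ G _ _ ≫ G.map (eComp W _ _ _) := by
          rw [Functor.LaxMonoidal.μ_natural_assoc]
      _ = (adj.homEquiv _ _ (g.map x y) ⊗ₘ adj.homEquiv _ _ (g.map y z)) ≫
            μ G _ _ ≫ G.map (eComp W _ _ _) := by
          rw [Adjunction.homEquiv_unit, Adjunction.homEquiv_unit, tensorHom_comp_tensorHom_assoc]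

/-- Backward direction of the hom-set equivalence. -/
def bwd (f : EnrichedFunctor V C (TransportEnrichment G D)) :
    EnrichedFunctor W (TransportEnrichment F C) D where
  obj x := (f.obj (show C from x) : D)
  map x y := (adj.homEquiv ((show C from x) ⟶[V] (show C from y)) _).symm
    (f.map (show C from x) (show C from y))
  map_id x := by
    obtain ⟨x, rfl⟩ : ∃ x' : C, x' = x := ⟨x, rfl⟩
    have hf : eId V x ≫ f.map x x = ε G ≫ G.map (eId W (show D from f.obj x)) := f.map_id x
    show (ε F ≫ F.map (eId V x)) ≫ (adj.homEquiv _ _).symm (f.map x x) = eId W (show D from f.obj x)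
    rw [Adjunction.homEquiv_counit]
    calc (ε F ≫ F.map (eId V x)) ≫ F.map (f.map x x) ≫ adj.counit.app _
        = ε F ≫ F.map (eId V x ≫ f.map x x) ≫ adj.counit.app _ := by
          rw [F.map_comp]; simp
      _ = ε F ≫ F.map (ε G) ≫ F.map (G.map (eId W (show D from f.obj x))) ≫ adj.counit.app _ := by
          rw [hf, F.map_comp]; simp
      _ = ε F ≫ (F.map (ε G) ≫ adj.counit.app (𝟙_ W)) ≫ eId W (show D from f.obj x) := by
          erw [adj.counit_naturality]; simp
      _ = eId W (show D from f.obj x) := by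
          rw [adj.map_ε_comp_counit_app_unit]; simp
  map_comp x y z := by
    obtain ⟨x, rfl⟩ : ∃ x' : C, x' = x := ⟨x, rfl⟩
    obtain ⟨y, rfl⟩ : ∃ y' : C, y' = y := ⟨y, rfl⟩
    obtain ⟨z, rfl⟩ : ∃ z' : C, z' = z := ⟨z, rfl⟩
    have hf : eComp V x y z ≫ f.map x z = (f.map x y ⊗ₘ f.map y z) ≫
        μ G _ _ ≫ G.map (eComp W (show D from f.obj x) (show D from f.obj y) (show D from f.obj z)) := f.map_comp x y z
    show (μ F (x ⟶[V] y) (y ⟶[V] z) ≫ F.map (eComp V x y z)) ≫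
        (adj.homEquiv _ _).symm (f.map x z) =
      ((adj.homEquiv _ _).symm (f.map x y) ⊗ₘ (adj.homEquiv _ _).symm (f.map y z)) ≫
        eComp W (show D from f.obj x) (show D from f.obj y) (show D from f.obj z)
    rw [Adjunction.homEquiv_counit, Adjunction.homEquiv_counit, Adjunction.homEquiv_counit]
    calc (μ F _ _ ≫ F.map (eComp V x y z)) ≫ F.map (f.map x z) ≫ adj.counit.app _
        = μ F _ _ ≫ F.map (eComp V x y z ≫ f.map x z) ≫ adj.counit.app _ := by
          rw [F.map_comp]; simp
      _ = μ F _ _ ≫ F.map (f.map x y ⊗ₘ f.map y z) ≫ F.map (μ G _ _) ≫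
            F.map (G.map (eComp W _ _ _)) ≫ adj.counit.app _ := by
          rw [hf]; simp [F.map_comp]
      _ = μ F _ _ ≫ F.map (f.map x y ⊗ₘ f.map y z) ≫ F.map (μ G _ _) ≫
            adj.counit.app _ ≫ eComp W _ _ _ := by
          erw [adj.counit_naturality]
      _ = μ F _ _ ≫ F.map (f.map x y ⊗ₘ f.map y z) ≫ δ F _ _ ≫
            (adj.counit.app _ ⊗ₘ adj.counit.app _) ≫ eComp W _ _ _ := by
          rw [adj.map_μ_comp_counit_app_tensor_assoc]; rfl
      _ = (F.map (f.map x y) ⊗ₘ F.map (f.map y z)) ≫ μ F _ _ ≫ δ F _ _ ≫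
            (adj.counit.app _ ⊗ₘ adj.counit.app _) ≫ eComp W _ _ _ := by
          rw [Functor.LaxMonoidal.μ_natural_assoc]
      _ = ((F.map (f.map x y) ≫ adj.counit.app _) ⊗ₘ
            (F.map (f.map y z) ≫ adj.counit.app _)) ≫ eComp W _ _ _ := by
          rw [Functor.Monoidal.μ_δ_assoc, tensorHom_comp_tensorHom_assoc]

/-- The hom-set equivalence. -/
def homEquivE : EnrichedFunctor W (TransportEnrichment F C) D ≃
    EnrichedFunctor V C (TransportEnrichment G D) where
  toFun := fwd F G adj
  invFun := bwd F G adj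
  left_inv g := myExt rfl (heq_of_eq (by
    funext x y; exact (adj.homEquiv _ _).symm_apply_apply _))
  right_inv f := myExt rfl (heq_of_eq (by
    funext x y; exact (adj.homEquiv _ _).apply_symm_apply _))

end Aux

/-- The adjunction `F ⊣ G` with `F` strong monoidal (and `G` given the
doctrinal lax monoidal structure) induces an adjunction `F' ⊣ G'` between the
categories of enriched categories: a hom-set equivalence
`WCat(F'A, B) ≃ VCat(A, G'B)`, natural in both variables. -/
theorem transport_adjunction (F : V ⥤ W) (G : W ⥤ V) (adj : F ⊣ G) [F.Monoidal] :
    letI : G.LaxMonoidal := adj.rightAdjointLaxMonoidal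
    ∃ e : ∀ (C : Type w) (iC : EnrichedCategory V C)
        (D : Type w) (iD : EnrichedCategory W D),
        (@EnrichedFunctor W _ _ (TransportEnrichment F C) (transportEnrichment F C iC)
          D iD) ≃
        (@EnrichedFunctor V _ _ C iC
          (TransportEnrichment G D) (transportEnrichment G D iD)),
      -- naturality in the first variable
      (∀ (C : Type w) (iC : EnrichedCategory V C) (D : Type w) (iD : EnrichedCategory W D)
        (C' : Type w) (iC' : EnrichedCategory V C')
        (h : @EnrichedFunctor V _ _ C' iC' C iC)
        (g : @EnrichedFunctor W _ _ (TransportEnrichment F C)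
          (transportEnrichment F C iC) D iD),
        e C' iC' D iD
            (@EnrichedFunctor.comp W _ _ (TransportEnrichment F C')
              (TransportEnrichment F C) D (transportEnrichment F C' iC')
              (transportEnrichment F C iC) iD (transportFunctor F iC' iC h) g) =
          @EnrichedFunctor.comp V _ _ C' C (TransportEnrichment G D) iC' iC
            (transportEnrichment G D iD) h (e C iC D iD g)) ∧
      -- naturality in the second variable
      (∀ (C : Type w) (iC : EnrichedCategory V C) (D : Type w) (iD : EnrichedCategory W D)
        (D' : Type w) (iD' : EnrichedCategory W D')
        (g : @EnrichedFunctor W _ _ (TransportEnrichment F C)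
          (transportEnrichment F C iC) D iD)
        (k : @EnrichedFunctor W _ _ D iD D' iD'),
        e C iC D' iD'
            (@EnrichedFunctor.comp W _ _ (TransportEnrichment F C) D D'
              (transportEnrichment F C iC) iD iD' g k) =
          @EnrichedFunctor.comp V _ _ C (TransportEnrichment G D)
            (TransportEnrichment G D') iC (transportEnrichment G D iD)
            (transportEnrichment G D' iD') (e C iC D iD g)
            (transportFunctor G iD iD' k)) := by
  letI : G.LaxMonoidal := adj.rightAdjointLaxMonoidal
  refine ⟨fun C iC D iD => letI := iC; letI := iD; homEquivE F G adj, ?_, ?_⟩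
  · intro C iC D iD C' iC' h g
    letI := iC; letI := iC'; letI := iD
    refine myExt rfl (heq_of_eq ?_)
    funext x y
    exact adj.homEquiv_naturality_left _ _
  · intro C iC D iD D' iD' g k
    letI := iC; letI := iD; letI := iD'
    refine myExt rfl (heq_of_eq ?_)
    funext x y
    exact adj.homEquiv_naturality_right _ _
end

section
/- Let V be a monoidal model category. A V-functor f : A → B that is surjective on objects and such that each f_{x,y} : A(x,y) → B(fx,fy) is a trivial fibration has the right lifting property with respect to the V-functor u : ∅ → 𝕀, where ∅ is the empty V-category and 𝕀 is the V-category with one object ∗ and 𝕀(∗,∗) = I, and with respect to each V-functor 2̄_i : 2̄_A → 2̄_B induced by a cofibration i : A → B of V, where 2̄_A has objects 0, 1 with 2̄_A(0,0) = 2̄_A(1,1) = I, 2̄_A(0,1) = A, 2̄_A(1,0) = ∅. -/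
/-!
STATEMENT 12: Let `V` be a monoidal model category (here: a monoidal category
with classes `Weq`, `Fib`, `Cof` of weak equivalences, fibrations and
cofibrations such that cofibrations have the left lifting property against
trivial fibrations — part of the model category axioms; we also assume, as
holds in any monoidal model category whose tensor preserves colimits, that
tensoring preserves initial objects).  A `V`-functor `f : A → B` which is
surjective on objects and locally a trivial fibration has the right lifting
property with respect to `u : ∅ → 𝕀` and with respect to each
`2̄_i : 2̄_A → 2̄_B` for `i : A → B` a cofibration of `V`.

Here `∅` is the empty `V`-category, `𝕀` is the `V`-category with one object
`∗` and `𝕀(∗,∗) = I`, and `2̄_A` has objects `0`, `1` with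
`2̄_A(0,0) = 2̄_A(1,1) = I`, `2̄_A(0,1) = A`, `2̄_A(1,0) = ∅` (initial), and
`2̄_i` is the identity on objects and `i` on the hom-object from `0` to `1`.
-/

open CategoryTheory MonoidalCategory Limits

universe v u w₁ w₂

variable (V : Type u) [Category.{v} V] [MonoidalCategory V] [HasInitial V]
  [∀ X : V, PreservesColimit (Functor.empty.{0} V) (tensorLeft X)]
  [∀ X : V, PreservesColimit (Functor.empty.{0} V) (tensorRight X)]

/-- Tensoring an initial object on the right is initial. -/
noncomputable def initTensor {X : V} (Y : V) (h : IsInitial X) :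
    IsInitial (X ⊗ Y) :=
  h.isInitialObj (tensorRight Y) X

/-- Tensoring an initial object on the left is initial. -/
noncomputable def tensorInit {X : V} (Y : V) (h : IsInitial X) :
    IsInitial (Y ⊗ X) :=
  h.isInitialObj (tensorLeft Y) X

/-- The empty `V`-category `∅`. -/
instance emptyEnriched : EnrichedCategory V PEmpty where
  Hom x _ := x.elim
  id x := x.elim
  comp x _ _ := x.elim
  id_comp x _ := x.elim
  comp_id x _ := x.elim
  assoc x _ _ _ := x.elim

/-- The unit `V`-category `𝕀`, with a single object `∗` and `𝕀(∗,∗) = I`. -/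
instance unitEnriched : EnrichedCategory V PUnit where
  Hom _ _ := 𝟙_ V
  id _ := 𝟙 (𝟙_ V)
  comp _ _ _ := (λ_ (𝟙_ V)).hom
  id_comp _ _ := by simp
  comp_id _ _ := by
    simp only [MonoidalCategory.whiskerLeft_id]
    monoidal_coherence
  assoc _ _ _ _ := by monoidal_coherence

/-- The `V`-functor `u : ∅ → 𝕀`. -/
def uFunctor : EnrichedFunctor V PEmpty PUnit where
  obj _ := PUnit.unit
  map x _ := x.elim
  map_id x := x.elim
  map_comp x _ _ := x.elim

/-- The objects of `2̄_A`: `0 = false` and `1 = true` (tagged by `A`). -/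
def TwoObj (_A : V) : Type := Bool

/-- The hom-objects of `2̄_A`. -/
noncomputable def twoHom (A : V) : TwoObj V A → TwoObj V A → V
  | false, false => 𝟙_ V
  | false, true => A
  | true, false => ⊥_ V
  | true, true => 𝟙_ V

/-- The identities of `2̄_A`. -/
noncomputable def twoId (A : V) : ∀ x : TwoObj V A, 𝟙_ V ⟶ twoHom V A x x
  | false => 𝟙 (𝟙_ V)
  | true => 𝟙 (𝟙_ V)

/-- The composition of `2̄_A`. -/
noncomputable def twoComp (A : V) :
    ∀ x y z : TwoObj V A, twoHom V A x y ⊗ twoHom V A y z ⟶ twoHom V A x z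
  | false, false, false => (λ_ _).hom
  | false, false, true => (λ_ _).hom
  | false, true, true => (ρ_ _).hom
  | true, true, true => (λ_ _).hom
  | true, false, _ => (initTensor V _ initialIsInitial).to _
  | true, true, false => (tensorInit V _ initialIsInitial).to _
  | false, true, false => (tensorInit V _ initialIsInitial).to _

/-- The `V`-category `2̄_A`. -/
noncomputable instance twoEnriched (A : V) : EnrichedCategory V (TwoObj V A) where
  Hom := twoHom V A
  id := twoId V A
  comp := twoComp V A
  id_comp x y := by
    rcases x with (_|_) <;> rcases y with (_|_)
    · show (λ_ (𝟙_ V)).inv ≫ 𝟙 (𝟙_ V) ▷ (𝟙_ V) ≫ (λ_ (𝟙_ V)).hom = 𝟙 (𝟙_ V)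
      simp
    · show (λ_ A).inv ≫ 𝟙 (𝟙_ V) ▷ A ≫ (λ_ A).hom = 𝟙 A
      simp
    · exact (show IsInitial (twoHom V A true false) from initialIsInitial).hom_ext _ _
    · show (λ_ (𝟙_ V)).inv ≫ 𝟙 (𝟙_ V) ▷ (𝟙_ V) ≫ (λ_ (𝟙_ V)).hom = 𝟙 (𝟙_ V)
      simp
  comp_id x y := by
    rcases x with (_|_) <;> rcases y with (_|_)
    · show (ρ_ (𝟙_ V)).inv ≫ (𝟙_ V) ◁ 𝟙 (𝟙_ V) ≫ (λ_ (𝟙_ V)).hom = 𝟙 (𝟙_ V)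
      simp only [MonoidalCategory.whiskerLeft_id]
      monoidal_coherence
    · show (ρ_ A).inv ≫ A ◁ 𝟙 (𝟙_ V) ≫ (ρ_ A).hom = 𝟙 A
      simp
    · exact (show IsInitial (twoHom V A true false) from initialIsInitial).hom_ext _ _
    · show (ρ_ (𝟙_ V)).inv ≫ (𝟙_ V) ◁ 𝟙 (𝟙_ V) ≫ (λ_ (𝟙_ V)).hom = 𝟙 (𝟙_ V)
      simp only [MonoidalCategory.whiskerLeft_id]
      monoidal_coherence
  assoc w x y z := by
    rcases w with (_|_) <;> rcases x with (_|_) <;> rcases y with (_|_) <;>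
      rcases z with (_|_)
    -- ffff
    · show (α_ (𝟙_ V) (𝟙_ V) (𝟙_ V)).inv ≫ ((λ_ (𝟙_ V)).hom ▷ (𝟙_ V)) ≫ (λ_ (𝟙_ V)).hom
        = ((𝟙_ V) ◁ (λ_ (𝟙_ V)).hom) ≫ (λ_ (𝟙_ V)).hom
      monoidal_coherence
    -- ffft
    · show (α_ (𝟙_ V) (𝟙_ V) A).inv ≫ ((λ_ (𝟙_ V)).hom ▷ A) ≫ (λ_ A).hom
        = ((𝟙_ V) ◁ (λ_ A).hom) ≫ (λ_ A).hom
      monoidal_coherence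
    -- fftf
    · exact (tensorInit V _ (tensorInit V _ initialIsInitial)).hom_ext _ _
    -- fftt
    · show (α_ (𝟙_ V) A (𝟙_ V)).inv ≫ ((λ_ A).hom ▷ (𝟙_ V)) ≫ (ρ_ A).hom
        = ((𝟙_ V) ◁ (ρ_ A).hom) ≫ (λ_ A).hom
      monoidal_coherence
    -- ftff
    · exact (tensorInit V _ (initTensor V _ initialIsInitial)).hom_ext _ _
    -- ftft
    · exact (tensorInit V _ (initTensor V _ initialIsInitial)).hom_ext _ _
    -- fttf
    · exact (tensorInit V _ (tensorInit V _ initialIsInitial)).hom_ext _ _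
    -- fttt
    · show (α_ A (𝟙_ V) (𝟙_ V)).inv ≫ ((ρ_ A).hom ▷ (𝟙_ V)) ≫ (ρ_ A).hom
        = (A ◁ (λ_ (𝟙_ V)).hom) ≫ (ρ_ A).hom
      monoidal_coherence
    -- tfff
    · exact (initTensor V _ initialIsInitial).hom_ext _ _
    -- tfft
    · exact (initTensor V _ initialIsInitial).hom_ext _ _
    -- tftf
    · exact (initTensor V _ initialIsInitial).hom_ext _ _
    -- tftt
    · exact (initTensor V _ initialIsInitial).hom_ext _ _
    -- ttff
    · exact (tensorInit V _ (initTensor V _ initialIsInitial)).hom_ext _ _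
    -- ttft
    · exact (tensorInit V _ (initTensor V _ initialIsInitial)).hom_ext _ _
    -- tttf
    · exact (tensorInit V _ (tensorInit V _ initialIsInitial)).hom_ext _ _
    -- tttt
    · show (α_ (𝟙_ V) (𝟙_ V) (𝟙_ V)).inv ≫ ((λ_ (𝟙_ V)).hom ▷ (𝟙_ V)) ≫ (λ_ (𝟙_ V)).hom
        = ((𝟙_ V) ◁ (λ_ (𝟙_ V)).hom) ≫ (λ_ (𝟙_ V)).hom
      monoidal_coherence

/-- The hom-components of the `V`-functor `2̄_i`. -/
noncomputable def twoMapHom {A B : V} (i : A ⟶ B) :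
    ∀ x y : Bool, twoHom V A x y ⟶ twoHom V B x y
  | false, false => 𝟙 (𝟙_ V)
  | false, true => i
  | true, false => 𝟙 (⊥_ V)
  | true, true => 𝟙 (𝟙_ V)

/-- The `V`-functor `2̄_i : 2̄_A → 2̄_B` induced by `i : A ⟶ B`: the identity
on objects, `i` on the hom-object from `0` to `1`. -/
noncomputable def twoFunctor {A B : V} (i : A ⟶ B) :
    EnrichedFunctor V (TwoObj V A) (TwoObj V B) where
  obj x := x
  map x y := twoMapHom V i x y
  map_id x := by
    rcases x with (_|_)
    · show 𝟙 (𝟙_ V) ≫ 𝟙 (𝟙_ V) = 𝟙 (𝟙_ V); simp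
    · show 𝟙 (𝟙_ V) ≫ 𝟙 (𝟙_ V) = 𝟙 (𝟙_ V); simp
  map_comp x y z := by
    rcases x with (_|_) <;> rcases y with (_|_) <;> rcases z with (_|_)
    · show (λ_ (𝟙_ V)).hom ≫ 𝟙 (𝟙_ V) = (𝟙 (𝟙_ V) ⊗ₘ 𝟙 (𝟙_ V)) ≫ (λ_ (𝟙_ V)).hom
      simp
    · show (λ_ A).hom ≫ i = (𝟙 (𝟙_ V) ⊗ₘ i) ≫ (λ_ B).hom
      simp
    · exact (tensorInit V _ initialIsInitial).hom_ext _ _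
    · show (ρ_ A).hom ≫ i = (i ⊗ₘ 𝟙 (𝟙_ V)) ≫ (ρ_ B).hom
      simp
    · exact (initTensor V _ initialIsInitial).hom_ext _ _
    · exact (initTensor V _ initialIsInitial).hom_ext _ _
    · exact (tensorInit V _ initialIsInitial).hom_ext _ _
    · show (λ_ (𝟙_ V)).hom ≫ 𝟙 (𝟙_ V) = (𝟙 (𝟙_ V) ⊗ₘ 𝟙 (𝟙_ V)) ≫ (λ_ (𝟙_ V)).hom
      simp

section Aux

lemma efExt {C : Type w₁} {D : Type w₂} [EnrichedCategory V C] [EnrichedCategory V D]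
    {F G : EnrichedFunctor V C D} (hobj : ∀ X, F.obj X = G.obj X)
    (hmap : ∀ X Y, F.map X Y ≫ eqToHom (by rw [hobj X, hobj Y]) = G.map X Y) :
    F = G := by
  obtain ⟨o, m, mi, mc⟩ := F
  obtain ⟨o', m', mi', mc'⟩ := G
  have ho : o = o' := funext hobj
  subst ho
  simp only [eqToHom_refl, Category.comp_id] at hmap
  have hm : m = m' := funext fun X => funext fun Y => hmap X Y
  subst hm
  rfl

lemma efMapCongr {C : Type w₁} {D : Type w₂} [EnrichedCategory V C] [EnrichedCategory V D]
    {F G : EnrichedFunctor V C D} (h : F = G) (X Y : C) :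
    F.map X Y = G.map X Y ≫ eqToHom (by rw [h]) := by
  subst h; simp

lemma eId_congr {C : Type w₁} [EnrichedCategory V C] {X Y : C} (h : X = Y) :
    eId V X ≫ eqToHom (by rw [h]) = eId V Y := by
  subst h; simp

lemma eId_tensor_eComp {C : Type w₁} [EnrichedCategory V C] {X Y : C} {W : V}
    (g : W ⟶ (X ⟶[V] Y)) :
    (eId V X ⊗ₘ g) ≫ eComp V X X Y = (λ_ W).hom ≫ g := by
  have h : eId V X ▷ (X ⟶[V] Y) ≫ eComp V X X Y = (λ_ (X ⟶[V] Y)).hom := by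
    rw [← cancel_epi (λ_ (X ⟶[V] Y)).inv]; simp
  rw [tensorHom_def', Category.assoc, h, ← leftUnitor_naturality]

lemma tensor_eId_eComp {C : Type w₁} [EnrichedCategory V C] {X Y : C} {W : V}
    (g : W ⟶ (X ⟶[V] Y)) :
    (g ⊗ₘ eId V Y) ≫ eComp V X Y Y = (ρ_ W).hom ≫ g := by
  have h : (X ⟶[V] Y) ◁ eId V Y ≫ eComp V X Y Y = (ρ_ (X ⟶[V] Y)).hom := by
    rw [← cancel_epi (ρ_ (X ⟶[V] Y)).inv]; simp
  rw [MonoidalCategory.tensorHom_def, Category.assoc, h, ← rightUnitor_naturality]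

end Aux

/-- A `V`-functor which is surjective on objects and locally a trivial
fibration has the right lifting property with respect to `u : ∅ → 𝕀` and
with respect to `2̄_i` for every cofibration `i` of `V`. -/
theorem surjective_local_trivial_fibration_rlp
    (Weq Fib Cof : MorphismProperty V)
    -- part of the model category axioms: cofibrations lift against
    -- trivial fibrations
    (hlift : ∀ {X Y P Q : V} (i : X ⟶ Y) (q : P ⟶ Q),
      Cof i → Weq q → Fib q → HasLiftingProperty i q)
    {C : Type w₁} {D : Type w₂} [EnrichedCategory V C] [EnrichedCategory V D]
    (f : EnrichedFunctor V C D)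
    (hsurj : Function.Surjective f.obj)
    (hloc : ∀ x y : C, Weq (f.map x y) ∧ Fib (f.map x y)) :
    -- right lifting property with respect to `u : ∅ → 𝕀`
    (∀ (top : EnrichedFunctor V PEmpty C) (bot : EnrichedFunctor V PUnit D),
      top.comp V f = (uFunctor V).comp V bot →
        ∃ ℓ : EnrichedFunctor V PUnit C,
          (uFunctor V).comp V ℓ = top ∧ ℓ.comp V f = bot) ∧
    -- right lifting property with respect to `2̄_i` for each cofibration `i`
    (∀ (A B : V) (i : A ⟶ B), Cof i →
      ∀ (top : EnrichedFunctor V (TwoObj V A) C)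
        (bot : EnrichedFunctor V (TwoObj V B) D),
        top.comp V f = (twoFunctor V i).comp V bot →
          ∃ ℓ : EnrichedFunctor V (TwoObj V B) C,
            (twoFunctor V i).comp V ℓ = top ∧ ℓ.comp V f = bot) := by
  constructor
  · -- lifting against `u : ∅ → 𝕀`
    intro top bot hcomm
    obtain ⟨c, hc⟩ := hsurj (bot.obj PUnit.unit)
    refine ⟨⟨fun _ => c, fun _ _ => eId V c, ?_, ?_⟩, ?_, ?_⟩
    · intro X
      show 𝟙 (𝟙_ V) ≫ eId V c = eId V c
      exact Category.id_comp _
    · intro X Y Z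
      show (λ_ (𝟙_ V)).hom ≫ eId V c = (eId V c ⊗ₘ eId V c) ≫ eComp V c c c
      rw [eId_tensor_eComp]
    · -- commutes with `u` : both sides are functors out of the empty category
      apply efExt V (fun x => x.elim) (fun x => x.elim)
    · refine efExt V (fun x => hc) ?_
      intro X Y
      show (eId V c ≫ f.map c c) ≫ _ = bot.map X Y
      erw [f.map_id, eId_congr V hc]
      have hb := bot.map_id PUnit.unit
      rw [show eId V PUnit.unit = 𝟙 (𝟙_ V) from rfl, Category.id_comp] at hb
      rw [hb]
  · -- lifting against `2̄_i`
    intro A B i hi top bot hcomm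
    have hobj : ∀ x : Bool, f.obj (top.obj x) = bot.obj x := fun x =>
      congrFun (congrArg EnrichedFunctor.obj hcomm) x
    have hmap : ∀ x y, top.map x y ≫ f.map _ _ =
        ((twoFunctor V i).map x y ≫ bot.map x y) ≫
          eqToHom (by rw [hobj x, hobj y]) := by
      intro x y
      have h := efMapCongr V hcomm x y
      simp at h; exact h
    -- the endpoint components of `top` are identities
    have htop0 : top.map false false = eId V (top.obj false) := by
      have h := top.map_id false
      exact (Category.id_comp _).symm.trans h
    have htop1 : top.map true true = eId V (top.obj true) := by
      have h := top.map_id true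
      exact (Category.id_comp _).symm.trans h
    -- lift the middle component using the model-category lifting axiom
    haveI : HasLiftingProperty i (f.map (top.obj false) (top.obj true)) :=
      hlift i _ hi (hloc _ _).1 (hloc _ _).2
    have sq : CommSq (top.map false true) i (f.map (top.obj false) (top.obj true))
        (bot.map false true ≫ eqToHom (by rw [hobj false, hobj true])) :=
      ⟨by
        rw [hmap false true]
        show ((i ≫ bot.map false true) ≫ _) = _
        exact Category.assoc _ _ _⟩
    haveI : sq.HasLift := (hlift i _ hi (hloc _ _).1 (hloc _ _).2).sq_hasLift sq
    refine ⟨⟨fun x => top.obj x, fun x y =>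
      match x, y with
      | false, false => top.map false false
      | false, true => sq.lift
      | true, false => initial.to _
      | true, true => top.map true true, ?_, ?_⟩, ?_, ?_⟩
    · rintro (_|_)
      · show 𝟙 (𝟙_ V) ≫ top.map false false = eId V (top.obj false)
        exact (Category.id_comp _).trans htop0
      · show 𝟙 (𝟙_ V) ≫ top.map true true = eId V (top.obj true)
        exact (Category.id_comp _).trans htop1
    · rintro (_|_) (_|_) (_|_)
      · exact top.map_comp false false false
      · show (λ_ B).hom ≫ sq.lift = (top.map false false ⊗ₘ sq.lift) ≫ eComp V _ _ _
        rw [htop0]; exact (eId_tensor_eComp V sq.lift).symm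
      · exact (tensorInit V _ initialIsInitial).hom_ext _ _
      · show (ρ_ B).hom ≫ sq.lift = (sq.lift ⊗ₘ top.map true true) ≫ eComp V _ _ _
        rw [htop1]; exact (tensor_eId_eComp V sq.lift).symm
      · exact (initTensor V _ initialIsInitial).hom_ext _ _
      · exact (initTensor V _ initialIsInitial).hom_ext _ _
      · exact (tensorInit V _ initialIsInitial).hom_ext _ _
      · exact top.map_comp true true true
    · -- `2̄_i ≫ ℓ = top`
      refine efExt V (fun x => rfl) ?_
      rintro (_|_) (_|_)
      · show (𝟙 (𝟙_ V) ≫ top.map false false) ≫ eqToHom _ = top.map false false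
        erw [eqToHom_refl, Category.comp_id, Category.id_comp]
      · show (i ≫ sq.lift) ≫ eqToHom _ = top.map false true
        erw [sq.fac_left, eqToHom_refl, Category.comp_id]
      · exact (show IsInitial (twoHom V A true false) from initialIsInitial).hom_ext _ _
      · show (𝟙 (𝟙_ V) ≫ top.map true true) ≫ eqToHom _ = top.map true true
        erw [eqToHom_refl, Category.comp_id, Category.id_comp]
    · -- `ℓ ≫ f = bot`
      refine efExt V hobj ?_
      rintro (_|_) (_|_)
      · show (top.map false false ≫ f.map _ _) ≫ _ = bot.map false false
        rw [hmap false false]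
        show ((𝟙 (𝟙_ V) ≫ bot.map false false) ≫ eqToHom _) ≫ eqToHom _ =
          bot.map false false
        erw [Category.id_comp, Category.assoc, eqToHom_trans, eqToHom_refl, Category.comp_id]
      · show (sq.lift ≫ f.map _ _) ≫ _ = bot.map false true
        rw [sq.fac_right]
        erw [Category.assoc, eqToHom_trans, eqToHom_refl, Category.comp_id]
      · exact (show IsInitial (twoHom V B true false) from initialIsInitial).hom_ext _ _
      · show (top.map true true ≫ f.map _ _) ≫ _ = bot.map true true
        rw [hmap true true]
        show ((𝟙 (𝟙_ V) ≫ bot.map true true) ≫ eqToHom _) ≫ eqToHom _ =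
          bot.map true true
        erw [Category.id_comp, Category.assoc, eqToHom_trans, eqToHom_refl, Category.comp_id]
end
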